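/- Fix an integer d ≥ 4 and γ ≥ 2d/3, and set Δ := d/(3γ). Let Π := { π ∈ ℝ^d : ‖π‖₂ ≤ 1 } be the Euclidean unit ball, and for i = 1,…,d define the linear bandit model M_i(π) := Rad(Δ·π_i), whose mean-reward function f^{M_i}(π) = Δ·π_i has maximal value Δ over Π. Let M̄(π) := Rad(0). Then for every Borel probability measure p on Π: max_{1≤i≤d} ∫ [ Δ·(1 − π_i) − γ·D_H²(Rad(Δ·π_i), Rad(0)) ] dp(π) ≥ d/(12γ). -/

import Mathlib

open MeasureTheory

/-- Squared Hellinger distance `D_H²(P,Q) = ∫ (√(dP/dν) − √(dQ/dν))² dν`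
computed with the dominating measure `ν = P + Q`. -/
noncomputable def sqHellinger {α : Type*} [MeasurableSpace α] (P Q : Measure α) : ℝ :=
  ∫ x, (Real.sqrt ((P.rnDeriv (P + Q)) x).toReal
      - Real.sqrt ((Q.rnDeriv (P + Q)) x).toReal) ^ 2 ∂(P + Q)

/-- Rademacher distribution on `{−1,+1} ⊆ ℝ` with mean `m`: it assigns probability
`(1+m)/2` to `+1` and `(1−m)/2` to `−1`. -/
noncomputable def rad (m : ℝ) : Measure ℝ :=
  ENNReal.ofReal ((1 + m) / 2) • Measure.dirac 1 +
    ENNReal.ofReal ((1 - m) / 2) • Measure.dirac (-1)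

open Classical in
lemma withDensity_dirac' (x : ℝ) (f : ℝ → ENNReal) (hf : Measurable f) :
    (Measure.dirac x).withDensity f = f x • Measure.dirac x := by
  ext s hs
  rw [withDensity_apply _ hs, setLIntegral_dirac' hf hs]
  simp only [Measure.smul_apply, Measure.dirac_apply' _ hs, smul_eq_mul, Set.indicator]
  split_ifs <;> simp

lemma integrable_smul_dirac (x : ℝ) (c : ℝ) (g : ℝ → ℝ) :
    Integrable g (ENNReal.ofReal c • Measure.dirac x) := by
  refine Integrable.smul_measure ?_ ENNReal.ofReal_ne_top
  refine (integrable_const (g x)).congr ?_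
  rw [Filter.eventuallyEq_comm, Filter.EventuallyEq, MeasureTheory.ae_dirac_eq]
  simp

lemma integral_two_point (a b : ℝ) (ha : 0 ≤ a) (hb : 0 ≤ b) (g : ℝ → ℝ) :
    ∫ x, g x ∂(ENNReal.ofReal a • Measure.dirac 1 + ENNReal.ofReal b • Measure.dirac (-1))
      = a * g 1 + b * g (-1) := by
  rw [integral_add_measure (integrable_smul_dirac _ _ _) (integrable_smul_dirac _ _ _),
    integral_smul_measure, integral_smul_measure, integral_dirac, integral_dirac,
    ENNReal.toReal_ofReal ha, ENNReal.toReal_ofReal hb]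
  simp [smul_eq_mul]

lemma measurable_twopt (A B : ENNReal) : Measurable (fun x : ℝ => if x = 1 then A else B) := by
  have : MeasurableSet {x : ℝ | x = 1} := by
    simpa using (measurableSet_singleton (1:ℝ))
  exact Measurable.ite this measurable_const measurable_const

lemma wd_two_point (a b : ℝ) (ha : 0 ≤ a) (hb : 0 ≤ b) (f : ℝ → ENNReal)
    (hf : Measurable f) :
    (ENNReal.ofReal a • Measure.dirac (1:ℝ) + ENNReal.ofReal b • Measure.dirac (-1:ℝ)).withDensity f
      = (ENNReal.ofReal a * f 1) • Measure.dirac (1:ℝ)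
        + (ENNReal.ofReal b * f (-1)) • Measure.dirac (-1:ℝ) := by
  rw [withDensity_add_measure, withDensity_smul_measure, withDensity_smul_measure,
    withDensity_dirac' _ _ hf, withDensity_dirac' _ _ hf, smul_smul, smul_smul]

lemma key_alg (c x : ℝ) (hc : 0 < c) (hx : 0 ≤ x) :
    c/2 * (Real.sqrt (x/c) - Real.sqrt (1/c))^2 = (Real.sqrt x - 1)^2 / 2 := by
  rw [Real.sqrt_div hx, Real.sqrt_div (by norm_num : (0:ℝ) ≤ 1), Real.sqrt_one,
    div_sub_div_same, div_pow, Real.sq_sqrt hc.le]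
  field_simp

lemma sqHellinger_rad (m : ℝ) (hm : |m| ≤ 1/2) :
    sqHellinger (rad m) (rad 0) =
      ((Real.sqrt (1+m) - 1)^2 + (Real.sqrt (1-m) - 1)^2) / 2 := by
  have hm1 : -1/2 ≤ m := by cases abs_le.mp hm; linarith
  have hm2 : m ≤ 1/2 := (abs_le.mp hm).2
  set ν : Measure ℝ := rad m + rad 0 with hν
  have hνeq : ν = ENNReal.ofReal ((2+m)/2) • Measure.dirac 1
      + ENNReal.ofReal ((2-m)/2) • Measure.dirac (-1) := by
    rw [hν]
    unfold rad
    have hre : ∀ (a b c e : ENNReal) (μ₁ μ₂ : Measure ℝ),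
        a • μ₁ + b • μ₂ + (c • μ₁ + e • μ₂) = (a+c) • μ₁ + (b+e) • μ₂ := by
      intro a b c e μ₁ μ₂
      rw [add_smul, add_smul]
      abel
    rw [hre, ← ENNReal.ofReal_add (by linarith) (by norm_num),
        ← ENNReal.ofReal_add (by linarith) (by norm_num)]
    norm_num
    congr 2 <;> ring
  have hc1 : (0:ℝ) < 2 + m := by linarith
  have hc2 : (0:ℝ) < 2 - m := by linarith
  set fm : ℝ → ENNReal := fun x => if x = 1 then ENNReal.ofReal ((1+m)/(2+m))
    else ENNReal.ofReal ((1-m)/(2-m)) with hfmdef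
  set gm : ℝ → ENNReal := fun x => if x = 1 then ENNReal.ofReal (1/(2+m))
    else ENNReal.ofReal (1/(2-m)) with hgmdef
  have hfmm : Measurable fm := measurable_twopt _ _
  have hgmm : Measurable gm := measurable_twopt _ _
  have hfm : rad m = ν.withDensity fm := by
    rw [hνeq, wd_two_point ((2+m)/2) ((2-m)/2) (by linarith) (by linarith) _ hfmm]
    unfold rad
    simp only [hfmdef]
    norm_num
    rw [← ENNReal.ofReal_mul (by linarith), ← ENNReal.ofReal_mul (by linarith)]
    congr 2 <;> exact congrArg ENNReal.ofReal (by field_simp; try ring)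
  have hgm : rad 0 = ν.withDensity gm := by
    rw [hνeq, wd_two_point ((2+m)/2) ((2-m)/2) (by linarith) (by linarith) _ hgmm]
    unfold rad
    simp only [hgmdef]
    norm_num
    rw [← ENNReal.ofReal_mul (by linarith), ← ENNReal.ofReal_mul (by linarith)]
    congr 2 <;> exact congrArg ENNReal.ofReal (by field_simp; try ring)
  haveI : IsFiniteMeasure ν := by
    constructor
    rw [hνeq]
    simp only [Measure.coe_add, Pi.add_apply, Measure.smul_apply, smul_eq_mul,
      measure_univ, mul_one]
    exact ENNReal.add_lt_top.mpr ⟨ENNReal.ofReal_lt_top, ENNReal.ofReal_lt_top⟩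
  have h1 : (rad m).rnDeriv ν =ᵐ[ν] fm := by
    rw [hfm]; exact Measure.rnDeriv_withDensity ν hfmm
  have h2 : (rad 0).rnDeriv ν =ᵐ[ν] gm := by
    rw [hgm]; exact Measure.rnDeriv_withDensity ν hgmm
  have hint : sqHellinger (rad m) (rad 0)
      = ∫ x, (Real.sqrt (fm x).toReal - Real.sqrt (gm x).toReal)^2 ∂ν := by
    unfold sqHellinger
    rw [← hν]
    refine integral_congr_ae ?_
    filter_upwards [h1, h2] with x e1 e2
    rw [e1, e2]
  rw [hint, hνeq, integral_two_point _ _ (by linarith) (by linarith)]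
  have e1 : fm 1 = ENNReal.ofReal ((1+m)/(2+m)) := if_pos rfl
  have e2 : fm (-1) = ENNReal.ofReal ((1-m)/(2-m)) := if_neg (by norm_num)
  have e3 : gm 1 = ENNReal.ofReal (1/(2+m)) := if_pos rfl
  have e4 : gm (-1) = ENNReal.ofReal (1/(2-m)) := if_neg (by norm_num)
  rw [e1, e2, e3, e4,
    ENNReal.toReal_ofReal (div_nonneg (by linarith) hc1.le),
    ENNReal.toReal_ofReal (div_nonneg (by linarith) hc2.le),
    ENNReal.toReal_ofReal (div_nonneg (by norm_num) hc1.le),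
    ENNReal.toReal_ofReal (div_nonneg (by norm_num) hc2.le),
    key_alg (2+m) (1+m) hc1 (by linarith), key_alg (2-m) (1-m) hc2 (by linarith)]
  ring


lemma phi_bound (m : ℝ) (hm : |m| ≤ 1/2) :
    (Real.sqrt (1+m) - 1)^2 + (Real.sqrt (1-m) - 1)^2 ≤ m^2 := by
  obtain ⟨hm1, hm2⟩ := abs_le.mp hm
  set s := Real.sqrt (1+m) with hsdef
  set t := Real.sqrt (1-m) with htdef
  have hs : s^2 = 1+m := Real.sq_sqrt (by linarith)
  have ht : t^2 = 1-m := Real.sq_sqrt (by linarith)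
  have hs0 : 0 ≤ s := Real.sqrt_nonneg _
  have ht0 : 0 ≤ t := Real.sqrt_nonneg _
  have hu : s*t = Real.sqrt (1-m^2) := by
    rw [hsdef, htdef, ← Real.sqrt_mul (by linarith)]
    ring_nf
  set u := Real.sqrt (1-m^2) with hudef
  have hmm : m^2 ≤ 1/4 := by nlinarith
  have hu2 : u^2 = 1-m^2 := Real.sq_sqrt (by nlinarith)
  have hu0 : 0 ≤ u := Real.sqrt_nonneg _
  have hc0 : 0 ≤ 1 - m^2 + m^4/8 := by nlinarith
  have hcsq : (1 - m^2 + m^4/8)^2 ≤ 1 - m^2 := by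
    have ha0 : (0:ℝ) ≤ m^2 := sq_nonneg m
    have key : ∀ a : ℝ, 0 ≤ a → a ≤ 1/4 → (1 - a + a^2/8)^2 ≤ 1 - a := by
      intro a ha0 ha
      nlinarith [mul_nonneg ha0 (sub_nonneg.mpr ha),
        mul_nonneg (mul_nonneg ha0 ha0) (sub_nonneg.mpr ha),
        mul_nonneg ha0 ha0, mul_nonneg (mul_nonneg ha0 ha0) ha0]
    have := key (m^2) ha0 hmm
    calc (1 - m^2 + m^4/8)^2 = (1 - m^2 + (m^2)^2/8)^2 := by ring
    _ ≤ 1 - m^2 := this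
  have h1 : 1 - m^2 + m^4/8 ≤ u := by
    have := Real.sqrt_le_sqrt hcsq
    rwa [Real.sqrt_sq hc0, ← hudef] at this
  have h4 : (2 - m^2/2)^2 ≤ (s+t)^2 := by nlinarith [h1, hu, hs, ht]
  have h3 : 2 - m^2/2 ≤ s + t := by
    have := Real.sqrt_le_sqrt h4
    rwa [Real.sqrt_sq (by nlinarith), Real.sqrt_sq (by linarith)] at this
  nlinarith [hs, ht, h3]

lemma coord_le {d : ℕ} (x : EuclideanSpace ℝ (Fin d)) (i : Fin d) : |x i| ≤ ‖x‖ := by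
  rw [EuclideanSpace.norm_eq]
  rw [← Real.sqrt_sq (abs_nonneg (x i))]
  apply Real.sqrt_le_sqrt
  have := Finset.single_le_sum (f := fun j => ‖x j‖^2) (fun j _ => sq_nonneg _)
    (Finset.mem_univ i)
  simpa [Real.norm_eq_abs, sq_abs] using this

lemma sum_sq_eq {d : ℕ} (x : EuclideanSpace ℝ (Fin d)) :
    ∑ i, (x i)^2 = ‖x‖^2 := by
  rw [EuclideanSpace.norm_eq, Real.sq_sqrt (by positivity)]
  simp [Real.norm_eq_abs, sq_abs]


set_option maxHeartbeats 2000000 in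
/-- lower bound on the Decision-Estimation Coefficient for linear
bandits over the Euclidean unit ball, with models `M_i(π) = Rad(Δ·π_i)` and
reference model `M̄(π) = Rad(0)`; `Δ·(1 − π_i)` is the regret of `π` under `M_i`. -/
theorem linear_bandit_dec_lower_bound (d : ℕ) (hd : 4 ≤ d) (γ Δ : ℝ)
    (hγ : 2 * (d : ℝ) / 3 ≤ γ) (hΔ : Δ = (d : ℝ) / (3 * γ))
    (p : Measure {x : EuclideanSpace ℝ (Fin d) // ‖x‖ ≤ 1}) [IsProbabilityMeasure p] :
    ∃ i : Fin d, (d : ℝ) / (12 * γ) ≤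
      ∫ π : {x : EuclideanSpace ℝ (Fin d) // ‖x‖ ≤ 1},
        (Δ * (1 - π.1 i) - γ * sqHellinger (rad (Δ * π.1 i)) (rad 0)) ∂p := by
  have hdr : (4:ℝ) ≤ (d:ℝ) := by exact_mod_cast hd
  have hγ0 : (0:ℝ) < γ := by nlinarith
  have hΔ0 : 0 < Δ := by rw [hΔ]; positivity
  have hΔhalf : Δ ≤ 1/2 := by
    rw [hΔ, div_le_iff₀ (by positivity)]
    nlinarith
  have habs : ∀ (π : {x : EuclideanSpace ℝ (Fin d) // ‖x‖ ≤ 1}) (i : Fin d),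
      |Δ * π.1 i| ≤ 1/2 := by
    intro π i
    have h1 : |π.1 i| ≤ 1 := le_trans (coord_le _ i) π.2
    rw [abs_mul, abs_of_pos hΔ0]
    calc Δ * |π.1 i| ≤ Δ * 1 := by nlinarith [abs_nonneg (π.1 i)]
    _ ≤ 1/2 := by linarith
  set G : Fin d → {x : EuclideanSpace ℝ (Fin d) // ‖x‖ ≤ 1} → ℝ := fun i π =>
    Δ * (1 - π.1 i) - γ * (((Real.sqrt (1+Δ*π.1 i) - 1)^2
      + (Real.sqrt (1-Δ*π.1 i) - 1)^2)/2) with hGdef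
  have hGeq : ∀ (i : Fin d) π, Δ * (1 - π.1 i) - γ * sqHellinger (rad (Δ * π.1 i)) (rad 0)
      = G i π := by
    intro i π
    rw [sqHellinger_rad _ (habs π i)]
  have hmeas : ∀ i, Measurable (G i) := by
    intro i
    have hc : Measurable (fun π : {x : EuclideanSpace ℝ (Fin d) // ‖x‖ ≤ 1} => π.1 i) :=
      (measurable_pi_apply i).comp ((WithLp.measurable_ofLp _ _).comp measurable_subtype_coe)
    apply Measurable.sub
    · exact measurable_const.mul (measurable_const.sub hc)
    · apply measurable_const.mul
      apply Measurable.div_const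
      apply Measurable.add
      · exact ((Real.continuous_sqrt.measurable.comp
          (measurable_const.add (measurable_const.mul hc))).sub measurable_const).pow_const 2
      · exact ((Real.continuous_sqrt.measurable.comp
          (measurable_const.sub (measurable_const.mul hc))).sub measurable_const).pow_const 2
  have hbdd : ∀ (i : Fin d) π, ‖G i π‖ ≤ Δ*2 + γ := by
    intro i π
    have hπ : |π.1 i| ≤ 1 := le_trans (coord_le _ i) π.2
    have hφ := phi_bound (Δ*π.1 i) (habs π i)
    have hφ0 : 0 ≤ (Real.sqrt (1+Δ*π.1 i) - 1)^2 + (Real.sqrt (1-Δ*π.1 i) - 1)^2 :=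
      add_nonneg (sq_nonneg _) (sq_nonneg _)
    have hm2 : (Δ*π.1 i)^2 ≤ 1/4 := by
      have := habs π i
      nlinarith [sq_abs (Δ*π.1 i), abs_nonneg (Δ*π.1 i)]
    rw [Real.norm_eq_abs, abs_le]
    obtain ⟨ha, hb⟩ := abs_le.mp hπ
    constructor
    · simp only [hGdef]
      nlinarith [hΔ0.le, hγ0.le]
    · simp only [hGdef]
      nlinarith [hΔ0.le, hγ0.le]
  have hInt : ∀ i, Integrable (G i) p := fun i =>
    (integrable_const (Δ*2 + γ)).mono' (hmeas i).aestronglyMeasurable (ae_of_all _ (hbdd i))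
  have hq2 : Real.sqrt d ^ 2 = (d:ℝ) := Real.sq_sqrt (by positivity)
  have hq4 : 2 ≤ Real.sqrt d := by
    have h := Real.sqrt_le_sqrt hdr
    rwa [show (4:ℝ) = 2^2 by norm_num, Real.sqrt_sq (by norm_num : (0:ℝ) ≤ 2)] at h
  have hnum : (d:ℝ)^2/(12*γ) ≤ Δ*d - Δ*Real.sqrt d - γ*Δ^2/2 := by
    have h7 : 12 * Real.sqrt d ≤ 7 * d := by nlinarith [hq2, hq4]
    rw [← sub_nonneg]
    have hexp : Δ*d - Δ*Real.sqrt d - γ*Δ^2/2 - (d:ℝ)^2/(12*γ)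
        = (7*(d:ℝ)^2 - 12*(d:ℝ)*Real.sqrt d)/(36*γ) := by
      rw [hΔ]; field_simp; ring
    rw [hexp]
    apply div_nonneg _ (by positivity)
    nlinarith [h7, hdr]
  have hkey : ∀ π : {x : EuclideanSpace ℝ (Fin d) // ‖x‖ ≤ 1},
      (d:ℝ)^2/(12*γ) ≤ ∑ i, G i π := by
    intro π
    have hQ : ∑ i, (π.1 i)^2 ≤ 1 := by
      rw [sum_sq_eq]
      nlinarith [π.2, norm_nonneg π.1]
    have hS2 : (∑ i, π.1 i)^2 ≤ (d:ℝ) := by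
      have h := sq_sum_le_card_mul_sum_sq (s := (Finset.univ : Finset (Fin d)))
        (f := fun i => π.1 i)
      simp only [Finset.card_univ, Fintype.card_fin] at h
      nlinarith [hQ, hdr]
    have hS : ∑ i, π.1 i ≤ Real.sqrt d := by
      nlinarith [hS2, hq2, hq4, sq_nonneg ((∑ i, π.1 i) - Real.sqrt d)]
    have hstep : ∀ i : Fin d, Δ - Δ*π.1 i - (γ*Δ^2/2)*(π.1 i)^2 ≤ G i π := by
      intro i
      have hp := phi_bound (Δ*π.1 i) (habs π i)
      simp only [hGdef]
      nlinarith [mul_le_mul_of_nonneg_left hp hγ0.le]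
    calc (d:ℝ)^2/(12*γ) ≤ Δ*d - Δ*Real.sqrt d - γ*Δ^2/2 := hnum
    _ ≤ ∑ i : Fin d, (Δ - Δ*π.1 i - (γ*Δ^2/2)*(π.1 i)^2) := by
        rw [Finset.sum_sub_distrib, Finset.sum_sub_distrib, Finset.sum_const,
          ← Finset.mul_sum, ← Finset.mul_sum]
        simp only [Finset.card_univ, Fintype.card_fin, nsmul_eq_mul]
        have h1 := mul_le_mul_of_nonneg_left hS hΔ0.le
        have h2 := mul_le_mul_of_nonneg_left hQ (by positivity : (0:ℝ) ≤ γ*Δ^2/2)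
        nlinarith
    _ ≤ ∑ i, G i π := Finset.sum_le_sum (fun i _ => hstep i)
  by_contra hcon
  push_neg at hcon
  haveI : Nonempty (Fin d) := ⟨⟨0, by omega⟩⟩
  have hlt : ∑ i : Fin d, ∫ π, G i π ∂p < d * ((d:ℝ)/(12*γ)) := by
    have hi : ∀ i ∈ (Finset.univ : Finset (Fin d)), ∫ π, G i π ∂p < (d:ℝ)/(12*γ) := by
      intro i _
      have heq : ∫ π, G i π ∂p
          = ∫ π, (Δ * (1 - π.1 i) - γ * sqHellinger (rad (Δ * π.1 i)) (rad 0)) ∂p :=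
        integral_congr_ae (ae_of_all _ (fun π => (hGeq i π).symm))
      rw [heq]
      exact hcon i
    have h := Finset.sum_lt_sum_of_nonempty Finset.univ_nonempty hi
    simpa [Finset.sum_const, Finset.card_univ, nsmul_eq_mul] using h
  have hsumint : ∫ π, (∑ i, G i π) ∂p = ∑ i : Fin d, ∫ π, G i π ∂p :=
    integral_finset_sum _ (fun i _ => hInt i)
  have hge : (d:ℝ)^2/(12*γ) ≤ ∫ π, (∑ i, G i π) ∂p := by
    have h0 : ∫ _π : {x : EuclideanSpace ℝ (Fin d) // ‖x‖ ≤ 1},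
        ((d:ℝ)^2/(12*γ)) ∂p = (d:ℝ)^2/(12*γ) := by
      simp
    rw [← h0]
    exact integral_mono (integrable_const _)
      (integrable_finset_sum _ (fun i _ => hInt i)) hkey
  have hsq : (d:ℝ)*((d:ℝ)/(12*γ)) = (d:ℝ)^2/(12*γ) := by ring
  rw [hsumint] at hge
  linarith
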